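/- arXiv:2302.07449 — 3 statements merged into one kernel-verified Lean document; each statement's English description precedes it below -/
import Mathlib

section
/- Under the model Y = f(X) + ε with ε independent of (X, X'_j), E[ε] = 0 and Var(ε) = σ² ∈ (0,∞), and with f(X) and f(X_{(j)}) square-integrable, the permutation importance satisfies the identity I(X_j) = E[(f(X) − f(X_{(j)}))²]. -/
open MeasureTheory ProbabilityTheory

/-! Both residuals share the noise: `Y - f(X) = ε` and `Y - f(X₍ⱼ₎) = ε + (f(X) - f(X₍ⱼ₎))`.
Since `ε` is centred and independent of `(X, X'ⱼ)`, it is orthogonal in `L²` to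
`f(X) - f(X₍ⱼ₎)`, so the two squared norms differ by exactly `‖f(X) - f(X₍ⱼ₎)‖₂²`. -/

namespace ProbabilityTheory

variable {Ω : Type*} [MeasurableSpace Ω] {μ : Measure Ω} {X Y : Ω → ℝ}

lemma IndepFun.integral_add_sq [IsFiniteMeasure μ] (hXY : IndepFun X Y μ) (hX : MemLp X 2 μ)
    (hY : MemLp Y 2 μ) (hX0 : μ[X] = 0) :
    ∫ ω, (X ω + Y ω) ^ 2 ∂μ = ∫ ω, X ω ^ 2 ∂μ + ∫ ω, Y ω ^ 2 ∂μ := by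
  have hcross : ∫ ω, X ω * Y ω ∂μ = 0 := by
    rw [hXY.integral_fun_mul_eq_mul_integral hX.1 hY.1, hX0, zero_mul]
  calc ∫ ω, (X ω + Y ω) ^ 2 ∂μ = ∫ ω, (X ω ^ 2 + Y ω ^ 2) + 2 * (X ω * Y ω) ∂μ :=
        integral_congr_ae (.of_forall fun ω => by ring)
    _ = ∫ ω, X ω ^ 2 ∂μ + ∫ ω, Y ω ^ 2 ∂μ := by
        rw [integral_add (f := fun ω => X ω ^ 2 + Y ω ^ 2) (g := fun ω => 2 * (X ω * Y ω))
            (hX.integrable_sq.add hY.integrable_sq) ((hX.integrable_mul hY).const_mul 2),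
          integral_const_mul, hcross, mul_zero, add_zero,
          integral_add hX.integrable_sq hY.integrable_sq]

end ProbabilityTheory

theorem permutation_importance_eq_general
    {Ω : Type*} [MeasurableSpace Ω] (P : Measure Ω) [IsProbabilityMeasure P]
    {p : ℕ} (j : Fin p) (X : Ω → (Fin p → ℝ)) (X' : Ω → ℝ) (ε : Ω → ℝ) (Y : Ω → ℝ)
    (f : (Fin p → ℝ) → ℝ) (σ2 : ℝ)
    (hε : Measurable ε) (hf : Measurable f)
    (hY : ∀ ω, Y ω = f (X ω) + ε ω)
    (hεindep : IndepFun ε (fun ω => (X ω, X' ω)) P)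
    (hεmean : ∫ ω, ε ω ∂P = 0)
    (hεvar : variance ε P = σ2) (hσ2 : 0 < σ2)
    (hL2 : MemLp (fun ω => f (X ω)) 2 P)
    (hL2' : MemLp (fun ω => f (Function.update (X ω) j (X' ω))) 2 P) :
    (∫ ω, (Y ω - f (Function.update (X ω) j (X' ω))) ^ 2 ∂P)
      - (∫ ω, (Y ω - f (X ω)) ^ 2 ∂P)
      = ∫ ω, (f (X ω) - f (Function.update (X ω) j (X' ω))) ^ 2 ∂P := by
  have hεL2 : MemLp ε 2 P :=
    memLp_two_of_variance_ne_zero hε.aestronglyMeasurable (hεvar ▸ hσ2.ne')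
  have hindep : IndepFun ε (fun ω => f (X ω) - f (Function.update (X ω) j (X' ω))) P :=
    hεindep.comp measurable_id ((hf.comp measurable_fst).sub (hf.comp measurable_update'))
  have hpermuted : ∫ ω, (Y ω - f (Function.update (X ω) j (X' ω))) ^ 2 ∂P
      = ∫ ω, (ε ω + (f (X ω) - f (Function.update (X ω) j (X' ω)))) ^ 2 ∂P :=
    integral_congr_ae (.of_forall fun ω => by simp only [hY]; ring)
  have horiginal : ∫ ω, (Y ω - f (X ω)) ^ 2 ∂P = ∫ ω, ε ω ^ 2 ∂P :=
    integral_congr_ae (.of_forall fun ω => by simp only [hY]; ring)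
  rw [hpermuted, horiginal, hindep.integral_add_sq hεL2 (hL2.sub hL2') hεmean, add_sub_cancel_left]

/-- Under the model `Y = f(X) + ε` with `ε` independent of `(X, X'ⱼ)`, `E[ε] = 0`,
`Var(ε) = σ² ∈ (0,∞)`, and `f(X)` and `f(X₍ⱼ₎)` square-integrable, the permutation
importance satisfies `I(Xⱼ) = E[(f(X) − f(X₍ⱼ₎))²]`. -/
theorem permutation_importance_eq
    {Ω : Type*} [MeasurableSpace Ω] (P : Measure Ω) [IsProbabilityMeasure P]
    {p : ℕ} (j : Fin p) (X : Ω → (Fin p → ℝ)) (X' : Ω → ℝ) (ε : Ω → ℝ) (Y : Ω → ℝ)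
    (f : (Fin p → ℝ) → ℝ) (σ2 : ℝ)
    (hX : Measurable X) (hX' : Measurable X') (hε : Measurable ε) (hf : Measurable f)
    (hident : IdentDistrib X' (fun ω => X ω j) P P)
    (hXindep : IndepFun X' X P)
    (hY : ∀ ω, Y ω = f (X ω) + ε ω)
    (hεindep : IndepFun ε (fun ω => (X ω, X' ω)) P)
    (hεmean : ∫ ω, ε ω ∂P = 0)
    (hεvar : variance ε P = σ2) (hσ2 : 0 < σ2)
    (hL2 : MemLp (fun ω => f (X ω)) 2 P)
    (hL2' : MemLp (fun ω => f (Function.update (X ω) j (X' ω))) 2 P) :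
    (∫ ω, (Y ω - f (Function.update (X ω) j (X' ω))) ^ 2 ∂P)
      - (∫ ω, (Y ω - f (X ω)) ^ 2 ∂P)
      = ∫ ω, (f (X ω) - f (Function.update (X ω) j (X' ω))) ^ 2 ∂P :=
  permutation_importance_eq_general P j X X' ε Y f σ2 hε hf hY hεindep hεmean hεvar hσ2 hL2 hL2'
end

section
/- Under the model Y = f(X) + ε with ε independent of (X, X'_j), E[ε] = 0, Var(ε) = σ² ∈ (0,∞), and f(X), f(X_{(j)}) square-integrable, the permutation importance is nonnegative, I(X_j) ≥ 0, and I(X_j) > 0 if and only if P(f(X) ≠ f(X_{(j)})) > 0. -/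
/-!
With `D = f(X) - f(X₍ⱼ₎)` we have `Y - f(X₍ⱼ₎) = D + ε` and `Y - f(X) = ε`. Since `D` is a
function of `(X, X'ⱼ)`, it is independent of the centred noise `ε`, so the cross term vanishes and
`I(Xⱼ) = E[D²]`, which is nonnegative and positive exactly when `D ≠ 0` with positive probability.
-/

open MeasureTheory ProbabilityTheory

section

variable {Ω : Type*} [MeasurableSpace Ω] {μ : Measure Ω}

lemma integral_add_sq_of_indepFun_of_integral_eq_zero {U V : Ω → ℝ}
    (hUV : IndepFun U V μ) (hU : MemLp U 2 μ) (hV : MemLp V 2 μ) (hV₀ : μ[V] = 0) :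
    ∫ ω, (U ω + V ω) ^ 2 ∂μ = ∫ ω, U ω ^ 2 ∂μ + ∫ ω, V ω ^ 2 ∂μ := by
  have hcross : ∫ ω, U ω * V ω ∂μ = 0 := by
    rw [hUV.integral_fun_mul_eq_mul_integral hU.aestronglyMeasurable hV.aestronglyMeasurable,
      hV₀, mul_zero]
  have hUVint : Integrable (fun ω => 2 * (U ω * V ω)) μ := (hU.integrable_mul hV).const_mul 2
  calc ∫ ω, (U ω + V ω) ^ 2 ∂μ
      = ∫ ω, U ω ^ 2 + 2 * (U ω * V ω) + V ω ^ 2 ∂μ := by congr with ω; ring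
    _ = ∫ ω, U ω ^ 2 ∂μ + 2 * ∫ ω, U ω * V ω ∂μ + ∫ ω, V ω ^ 2 ∂μ := by
      rw [integral_add (f := fun ω => U ω ^ 2 + 2 * (U ω * V ω))
          (hU.integrable_sq.add hUVint) hV.integrable_sq,
        integral_add hU.integrable_sq hUVint, integral_const_mul]
    _ = ∫ ω, U ω ^ 2 ∂μ + ∫ ω, V ω ^ 2 ∂μ := by rw [hcross]; ring

lemma integral_sq_sub_pos_iff {G H : Ω → ℝ} (hGH : MemLp (G - H) 2 μ) :
    0 < ∫ ω, (G ω - H ω) ^ 2 ∂μ ↔ 0 < μ {ω | G ω ≠ H ω} := by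
  have hsupp : Function.support (fun ω => (G ω - H ω) ^ 2) = {ω | G ω ≠ H ω} := by
    ext ω
    simp [sub_eq_zero]
  rw [integral_pos_iff_support_of_nonneg (f := fun ω => (G ω - H ω) ^ 2)
    (fun ω => sq_nonneg _) hGH.integrable_sq, hsupp]

end

theorem permutation_importance_nonneg_pos_iff_general
    {Ω : Type*} [MeasurableSpace Ω] (P : Measure Ω) [IsProbabilityMeasure P]
    {p : ℕ} (j : Fin p) (X : Ω → (Fin p → ℝ)) (X' : Ω → ℝ) (ε : Ω → ℝ) (Y : Ω → ℝ)
    (f : (Fin p → ℝ) → ℝ) (σ2 : ℝ)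
    (hε : Measurable ε) (hf : Measurable f)
    (hY : ∀ ω, Y ω = f (X ω) + ε ω)
    (hεindep : IndepFun ε (fun ω => (X ω, X' ω)) P)
    (hεmean : ∫ ω, ε ω ∂P = 0)
    (hεvar : variance ε P = σ2) (hσ2 : 0 < σ2)
    (hL2 : MemLp (fun ω => f (X ω)) 2 P)
    (hL2' : MemLp (fun ω => f (Function.update (X ω) j (X' ω))) 2 P) :
    0 ≤ (∫ ω, (Y ω - f (Function.update (X ω) j (X' ω))) ^ 2 ∂P)
          - (∫ ω, (Y ω - f (X ω)) ^ 2 ∂P)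
    ∧ (0 < (∫ ω, (Y ω - f (Function.update (X ω) j (X' ω))) ^ 2 ∂P)
            - (∫ ω, (Y ω - f (X ω)) ^ 2 ∂P)
        ↔ 0 < P {ω | f (X ω) ≠ f (Function.update (X ω) j (X' ω))}) := by
  set G : Ω → ℝ := fun ω => f (X ω)
  set H : Ω → ℝ := fun ω => f (Function.update (X ω) j (X' ω))
  have hφ : Measurable fun q : (Fin p → ℝ) × ℝ => f q.1 - f (Function.update q.1 j q.2) :=
    (hf.comp measurable_fst).sub (hf.comp measurable_update')
  have hind : IndepFun (G - H) ε P := (hεindep.comp measurable_id hφ).symm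
  have hεL2 : MemLp ε 2 P :=
    memLp_two_of_variance_ne_zero hε.aestronglyMeasurable (hεvar ▸ hσ2.ne')
  have hI : ∫ ω, (Y ω - H ω) ^ 2 ∂P - ∫ ω, (Y ω - G ω) ^ 2 ∂P = ∫ ω, (G ω - H ω) ^ 2 ∂P := by
    have hYH : ∀ ω, Y ω - H ω = (G - H) ω + ε ω := fun ω => by
      rw [hY]; simp only [Pi.sub_apply, G]; ring
    have hYG : ∀ ω, Y ω - G ω = ε ω := fun ω => by rw [hY]; ring
    simp only [hYH, hYG]
    rw [integral_add_sq_of_indepFun_of_integral_eq_zero hind (hL2.sub hL2') hεL2 hεmean]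
    simp
  rw [hI]
  exact ⟨integral_nonneg fun ω => sq_nonneg _, integral_sq_sub_pos_iff (hL2.sub hL2')⟩

/-- The permutation importance is nonnegative, and it is strictly positive if and only
if `P(f(X) ≠ f(X₍ⱼ₎)) > 0`. -/
theorem permutation_importance_nonneg_pos_iff
    {Ω : Type*} [MeasurableSpace Ω] (P : Measure Ω) [IsProbabilityMeasure P]
    {p : ℕ} (j : Fin p) (X : Ω → (Fin p → ℝ)) (X' : Ω → ℝ) (ε : Ω → ℝ) (Y : Ω → ℝ)
    (f : (Fin p → ℝ) → ℝ) (σ2 : ℝ)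
    (hX : Measurable X) (hX' : Measurable X') (hε : Measurable ε) (hf : Measurable f)
    (hident : IdentDistrib X' (fun ω => X ω j) P P)
    (hXindep : IndepFun X' X P)
    (hY : ∀ ω, Y ω = f (X ω) + ε ω)
    (hεindep : IndepFun ε (fun ω => (X ω, X' ω)) P)
    (hεmean : ∫ ω, ε ω ∂P = 0)
    (hεvar : variance ε P = σ2) (hσ2 : 0 < σ2)
    (hL2 : MemLp (fun ω => f (X ω)) 2 P)
    (hL2' : MemLp (fun ω => f (Function.update (X ω) j (X' ω))) 2 P) :
    0 ≤ (∫ ω, (Y ω - f (Function.update (X ω) j (X' ω))) ^ 2 ∂P)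
          - (∫ ω, (Y ω - f (X ω)) ^ 2 ∂P)
    ∧ (0 < (∫ ω, (Y ω - f (Function.update (X ω) j (X' ω))) ^ 2 ∂P)
            - (∫ ω, (Y ω - f (X ω)) ^ 2 ∂P)
        ↔ 0 < P {ω | f (X ω) ≠ f (Function.update (X ω) j (X' ω))}) :=
  permutation_importance_nonneg_pos_iff_general P j X X' ε Y f σ2 hε hf hY hεindep hεmean hεvar hσ2
    hL2 hL2'
end

section
/- Let X be a real-valued random variable and H a random variable taking values in {1,…,g} with P(H = l) > 0 for every l. Define the Kolmogorov filter statistic K = max over pairs 1 ≤ l, γ ≤ g of sup over x ∈ ℝ of |P(X ≤ x | H = l) − P(X ≤ x | H = γ)|. Then K = 0 if and only if X and H are independent. -/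
open MeasureTheory ProbabilityTheory

/-- The Kolmogorov filter statistic
`K = max_{l,γ} sup_x |P(X ≤ x | H = l) − P(X ≤ x | H = γ)|` vanishes
if and only if `X` and `H` are independent. -/
theorem kolmogorov_filter_zero_iff_indep
    {Ω : Type*} [MeasurableSpace Ω] (P : Measure Ω) [IsProbabilityMeasure P]
    (X : Ω → ℝ) (g : ℕ) (hg : 1 ≤ g) (H : Ω → Fin g)
    (hX : Measurable X) (hH : Measurable H)
    (hpos : ∀ l : Fin g, 0 < P {ω | H ω = l})
    (F : ℝ → Fin g → ℝ)
    (hF : ∀ x l, F x l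
      = (P ({ω | X ω ≤ x} ∩ {ω | H ω = l})).toReal / (P {ω | H ω = l}).toReal)
    (K : ℝ)
    (hK : K = ⨆ (l : Fin g) (γ : Fin g) (x : ℝ), |F x l - F x γ|) :
    K = 0 ↔ (∀ B : Set ℝ, MeasurableSet B → ∀ l : Fin g,
      P ({ω | X ω ∈ B} ∩ {ω | H ω = l}) = P {ω | X ω ∈ B} * P {ω | H ω = l}) := by
  haveI : Nonempty (Fin g) := ⟨⟨0, hg⟩⟩
  have hHl : ∀ l : Fin g, MeasurableSet {ω | H ω = l} := fun l =>
    hH (measurableSet_singleton l)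
  have hpne : ∀ l : Fin g, P {ω | H ω = l} ≠ ⊤ := fun l => (measure_lt_top P _).ne
  have hptR : ∀ l : Fin g, (0:ℝ) < (P {ω | H ω = l}).toReal := fun l =>
    ENNReal.toReal_pos (hpos l).ne' (hpne l)
  -- bounds on F
  have hF01 : ∀ x l, 0 ≤ F x l ∧ F x l ≤ 1 := by
    intro x l
    rw [hF]
    constructor
    · positivity
    · rw [div_le_one (hptR l)]
      exact ENNReal.toReal_mono (hpne l) (measure_mono Set.inter_subset_right)
  have habs : ∀ x (l γ : Fin g), |F x l - F x γ| ≤ 2 := by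
    intro x l γ
    have h1 := hF01 x l
    have h2 := hF01 x γ
    rw [abs_sub_le_iff]; constructor <;> linarith
  constructor
  · intro hK0
    -- step 1: F x l = F x γ for all x l γ
    have hEq : ∀ x (l γ : Fin g), F x l = F x γ := by
      intro x l γ
      have hb1 : ∀ l γ : Fin g, BddAbove (Set.range fun x : ℝ => |F x l - F x γ|) :=
        fun l γ => ⟨2, by rintro _ ⟨x, rfl⟩; exact habs x l γ⟩
      have hb2 : ∀ l : Fin g,
          BddAbove (Set.range fun γ : Fin g => ⨆ x : ℝ, |F x l - F x γ|) := by
        intro l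
        refine ⟨2, ?_⟩
        rintro _ ⟨γ, rfl⟩
        exact ciSup_le fun x => habs x l γ
      have hb3 : BddAbove (Set.range fun l : Fin g =>
          ⨆ (γ : Fin g) (x : ℝ), |F x l - F x γ|) := by
        refine ⟨2, ?_⟩
        rintro _ ⟨l, rfl⟩
        exact ciSup_le fun γ => ciSup_le fun x => habs x l γ
      have key : |F x l - F x γ| ≤ K := by
        rw [hK]
        calc |F x l - F x γ| ≤ ⨆ x : ℝ, |F x l - F x γ| := le_ciSup (hb1 l γ) x
          _ ≤ ⨆ (γ : Fin g) (x : ℝ), |F x l - F x γ| := le_ciSup (hb2 l) γ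
          _ ≤ ⨆ (l : Fin g) (γ : Fin g) (x : ℝ), |F x l - F x γ| := le_ciSup hb3 l
      rw [hK0] at key
      have := abs_nonneg (F x l - F x γ)
      have : |F x l - F x γ| = 0 := le_antisymm key this
      linarith [abs_eq_zero.mp this, sub_eq_zero.mp (abs_eq_zero.mp this)]
    -- step 2: CDF factorization
    have hdisj : ∀ (A : Set Ω), Pairwise (Function.onFun Disjoint
        (fun l : Fin g => A ∩ {ω | H ω = l})) := by
      intro A l γ hlγ
      simp only [Function.onFun, Set.disjoint_left]
      rintro ω ⟨-, h1⟩ ⟨-, h2⟩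
      simp only [Set.mem_setOf_eq] at h1 h2
      exact hlγ (h1.symm.trans h2)
    have hpartE : ∀ (A : Set Ω), MeasurableSet A →
        P A = ∑ l : Fin g, P (A ∩ {ω | H ω = l}) := by
      intro A hA
      have hU : A = ⋃ l : Fin g, (A ∩ {ω | H ω = l}) := by
        ext ω; simp
      conv_lhs => rw [hU]
      rw [measure_iUnion (hdisj A) (fun l => hA.inter (hHl l)), tsum_fintype]
    have hpartition : ∀ x : ℝ,
        (P {ω | X ω ≤ x}).toReal
          = ∑ l : Fin g, (P ({ω | X ω ≤ x} ∩ {ω | H ω = l})).toReal := by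
      intro x
      rw [← ENNReal.toReal_sum (fun l _ => (measure_lt_top P _).ne)]
      congr 1
      exact hpartE _ (hX measurableSet_Iic)
    have hsum1 : ∑ l : Fin g, (P {ω | H ω = l}).toReal = 1 := by
      rw [← ENNReal.toReal_sum (fun l _ => hpne l)]
      have h2 : P Set.univ = ∑ l : Fin g, P ((Set.univ : Set Ω) ∩ {ω | H ω = l}) :=
        hpartE Set.univ MeasurableSet.univ
      simp only [Set.univ_inter, measure_univ] at h2
      rw [← h2]; simp
    have hcdf : ∀ (x : ℝ) (l : Fin g),
        P ({ω | X ω ≤ x} ∩ {ω | H ω = l}) = P {ω | X ω ≤ x} * P {ω | H ω = l} := by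
      intro x l
      have hq : ∀ γ : Fin g, (P ({ω | X ω ≤ x} ∩ {ω | H ω = γ})).toReal
          = F x l * (P {ω | H ω = γ}).toReal := by
        intro γ
        rw [hEq x l γ, hF]
        rw [div_mul_cancel₀ _ (hptR γ).ne']
      have hFl : F x l = (P {ω | X ω ≤ x}).toReal := by
        have h := hpartition x
        rw [Finset.sum_congr rfl (fun γ _ => hq γ), ← Finset.mul_sum, hsum1] at h
        linarith
      have htr : (P ({ω | X ω ≤ x} ∩ {ω | H ω = l})).toReal
          = (P {ω | X ω ≤ x} * P {ω | H ω = l}).toReal := by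
        rw [hq l, hFl, ENNReal.toReal_mul]
      exact (ENNReal.toReal_eq_toReal_iff' (measure_lt_top P _).ne
        (ENNReal.mul_ne_top (measure_lt_top P _).ne (hpne l))).mp htr
    -- step 3: extend to all Borel sets via ext_of_Iic
    intro B hB l
    set μ₁ : Measure ℝ := Measure.map X (P.restrict {ω | H ω = l}) with hμ₁
    set μ₂ : Measure ℝ := (P {ω | H ω = l}) • (Measure.map X P) with hμ₂
    haveI : IsFiniteMeasure μ₁ := Measure.isFiniteMeasure_map _ _
    haveI : IsFiniteMeasure (Measure.map X P) := Measure.isFiniteMeasure_map _ _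
    haveI : IsFiniteMeasure μ₂ := by
      constructor
      rw [hμ₂, Measure.smul_apply, smul_eq_mul]
      exact ENNReal.mul_lt_top (hpne l).lt_top (measure_lt_top _ _)
    have hμ₁app : ∀ (S : Set ℝ), MeasurableSet S →
        μ₁ S = P ({ω | X ω ∈ S} ∩ {ω | H ω = l}) := by
      intro S hS
      rw [hμ₁, Measure.map_apply hX hS, Measure.restrict_apply (hX hS)]
      rfl
    have hμ₂app : ∀ (S : Set ℝ),
        μ₂ S = P {ω | H ω = l} * (Measure.map X P) S := by
      intro S; rw [hμ₂, Measure.smul_apply, smul_eq_mul]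
    have hext : μ₁ = μ₂ := by
      refine Measure.ext_of_Iic μ₁ μ₂ (fun x => ?_)
      rw [hμ₁app _ measurableSet_Iic, hμ₂app, Measure.map_apply hX measurableSet_Iic]
      have hset : {ω | X ω ∈ Set.Iic x} = {ω | X ω ≤ x} := by ext ω; simp
      have hset2 : X ⁻¹' Set.Iic x = {ω | X ω ≤ x} := by ext ω; simp [Set.mem_Iic]
      rw [hset, hset2, hcdf x l, mul_comm]
    calc P ({ω | X ω ∈ B} ∩ {ω | H ω = l}) = μ₁ B := (hμ₁app B hB).symm
      _ = μ₂ B := by rw [hext]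
      _ = P {ω | H ω = l} * P {ω | X ω ∈ B} := by
          rw [hμ₂app, Measure.map_apply hX hB]; rfl
      _ = P {ω | X ω ∈ B} * P {ω | H ω = l} := mul_comm _ _
  · intro hind
    have hFconst : ∀ x l, F x l = (P {ω | X ω ≤ x}).toReal := by
      intro x l
      have h := hind (Set.Iic x) measurableSet_Iic l
      have hset : {ω | X ω ∈ Set.Iic x} = {ω | X ω ≤ x} := by ext ω; simp
      rw [hset] at h
      rw [hF, h, ENNReal.toReal_mul, mul_div_assoc, div_self (hptR l).ne', mul_one]
    have : ∀ x (l γ : Fin g), |F x l - F x γ| = 0 := by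
      intro x l γ; rw [hFconst x l, hFconst x γ, sub_self, abs_zero]
    have h1 : ∀ l γ : Fin g, (⨆ x : ℝ, |F x l - F x γ|) = 0 := by
      intro l γ
      rw [show (fun x : ℝ => |F x l - F x γ|) = fun _ => (0:ℝ) from
        funext fun x => this x l γ, ciSup_const]
    have h2 : ∀ l : Fin g, (⨆ (γ : Fin g) (x : ℝ), |F x l - F x γ|) = 0 := by
      intro l
      rw [show (fun γ : Fin g => ⨆ x : ℝ, |F x l - F x γ|) = fun _ => (0:ℝ) from
        funext fun γ => h1 l γ, ciSup_const]
    rw [hK, show (fun l : Fin g => ⨆ (γ : Fin g) (x : ℝ), |F x l - F x γ|)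
      = fun _ => (0:ℝ) from funext fun l => h2 l, ciSup_const]
end
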